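/- Define the rational functions h₁(t) = (−1/6)(2t−1)/((t−1)³(t+1)), h₂(t) = (−1/6)(2t−1)/(t³(t−2)), and h₃(t) = (1/12) t³(t−2)/(t⁴ − 2t³ + 4t − 2). Then, as identities of rational functions (valid at every complex t where all denominators are nonzero): (1) h₁'(t) = t²/((t+1)²(t−1)⁴); (2) h₂'(t) = (t−1)²/((t−2)² t⁴); (3) h₃'(t) = t²(t−1)²/(t⁴ − 2t³ + 4t − 2)²; (4) h₂ = h₁/(6h₁ + 1); (5) h₃ = (6h₁ + 1)/(−72 h₁ + 12). In particular h₂ and h₃ are Möbius transformations (linear fractional transformations) of h₁. -/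

import Mathlib

noncomputable section

/-- `h₁(t) = (−1/6)(2t−1)/((t−1)³(t+1))`. -/
def h1 (t : ℂ) : ℂ := -1 / 6 * ((2 * t - 1) / ((t - 1) ^ 3 * (t + 1)))

/-- `h₂(t) = (−1/6)(2t−1)/(t³(t−2))`. -/
def h2 (t : ℂ) : ℂ := -1 / 6 * ((2 * t - 1) / (t ^ 3 * (t - 2)))

/-- `h₃(t) = (1/12)·t³(t−2)/(t⁴ − 2t³ + 4t − 2)`. -/
def h3 (t : ℂ) : ℂ := 1 / 12 * (t ^ 3 * (t - 2) / (t ^ 4 - 2 * t ^ 3 + 4 * t - 2))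

/-- Identities of rational functions: the derivatives of `h₁, h₂, h₃`, and the Möbius relations
`h₂ = h₁/(6h₁+1)` and `h₃ = (6h₁+1)/(−72h₁+12)`, valid wherever all denominators are nonzero. -/
theorem rational_solutions_level_two :
    (∀ t : ℂ, t - 1 ≠ 0 → t + 1 ≠ 0 →
      deriv h1 t = t ^ 2 / ((t + 1) ^ 2 * (t - 1) ^ 4)) ∧
    (∀ t : ℂ, t ≠ 0 → t - 2 ≠ 0 →
      deriv h2 t = (t - 1) ^ 2 / ((t - 2) ^ 2 * t ^ 4)) ∧
    (∀ t : ℂ, t ^ 4 - 2 * t ^ 3 + 4 * t - 2 ≠ 0 →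
      deriv h3 t = t ^ 2 * (t - 1) ^ 2 / (t ^ 4 - 2 * t ^ 3 + 4 * t - 2) ^ 2) ∧
    (∀ t : ℂ, t - 1 ≠ 0 → t + 1 ≠ 0 → t ≠ 0 → t - 2 ≠ 0 → 6 * h1 t + 1 ≠ 0 →
      h2 t = h1 t / (6 * h1 t + 1)) ∧
    (∀ t : ℂ, t - 1 ≠ 0 → t + 1 ≠ 0 → t ^ 4 - 2 * t ^ 3 + 4 * t - 2 ≠ 0 →
      -72 * h1 t + 12 ≠ 0 →
      h3 t = (6 * h1 t + 1) / (-72 * h1 t + 12)) := by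
  refine ⟨?_, ?_, ?_, ?_, ?_⟩
  · intro t h1ne h2ne
    have hDne : (t - 1) ^ 3 * (t + 1) ≠ 0 := mul_ne_zero (pow_ne_zero _ h1ne) h2ne
    have hN : HasDerivAt (fun t : ℂ => 2 * t - 1) 2 t := by
      simpa using ((hasDerivAt_id t).const_mul 2).sub_const 1
    have hD : HasDerivAt (fun t : ℂ => (t - 1) ^ 3 * (t + 1))
        ((3 : ℕ) * (t - 1) ^ 2 * 1 * (t + 1) + (t - 1) ^ 3 * 1) t :=
      (((hasDerivAt_id t).sub_const 1).pow 3).mul ((hasDerivAt_id t).add_const 1)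
    have h := ((hN.div hD hDne).const_mul ((-1 : ℂ) / 6)).deriv
    rw [show (fun y : ℂ => -1 / 6 * (((fun t : ℂ => 2 * t - 1) / (fun t : ℂ => (t - 1) ^ 3 * (t + 1)) : ℂ → ℂ) y)) = h1 from rfl] at h
    rw [h]
    field_simp
    ring
  · intro t h0 h2ne
    have hDne : t ^ 3 * (t - 2) ≠ 0 := mul_ne_zero (pow_ne_zero _ h0) h2ne
    have hN : HasDerivAt (fun t : ℂ => 2 * t - 1) 2 t := by
      simpa using ((hasDerivAt_id t).const_mul 2).sub_const 1
    have hD : HasDerivAt (fun t : ℂ => t ^ 3 * (t - 2))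
        ((3 : ℕ) * t ^ 2 * 1 * (t - 2) + t ^ 3 * 1) t :=
      ((hasDerivAt_id t).pow 3).mul ((hasDerivAt_id t).sub_const 2)
    have h := ((hN.div hD hDne).const_mul ((-1 : ℂ) / 6)).deriv
    rw [show (fun y : ℂ => -1 / 6 * (((fun t : ℂ => 2 * t - 1) / (fun t : ℂ => t ^ 3 * (t - 2)) : ℂ → ℂ) y)) = h2 from rfl] at h
    rw [h]
    field_simp
    ring
  · intro t hDne
    have hN : HasDerivAt (fun t : ℂ => t ^ 3 * (t - 2))
        ((3 : ℕ) * t ^ 2 * 1 * (t - 2) + t ^ 3 * 1) t :=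
      ((hasDerivAt_id t).pow 3).mul ((hasDerivAt_id t).sub_const 2)
    have hD : HasDerivAt (fun t : ℂ => t ^ 4 - 2 * t ^ 3 + 4 * t - 2)
        ((4 : ℕ) * t ^ 3 * 1 - 2 * ((3 : ℕ) * t ^ 2 * 1) + 4) t := by
      have := ((((hasDerivAt_id t).pow 4).sub (((hasDerivAt_id t).pow 3).const_mul 2)).add
        ((hasDerivAt_id t).const_mul 4)).sub_const 2
      simpa using this
    have h := ((hN.div hD hDne).const_mul ((1 : ℂ) / 12)).deriv
    rw [show (fun y : ℂ => 1 / 12 * (((fun t : ℂ => t ^ 3 * (t - 2)) / (fun t : ℂ => t ^ 4 - 2 * t ^ 3 + 4 * t - 2) : ℂ → ℂ) y)) = h3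
      from rfl] at h
    rw [h]
    field_simp
    ring
  · intro t h1ne h2ne h0 h3ne hM
    have key : 6 * h1 t + 1 = t ^ 3 * (t - 2) / ((t - 1) ^ 3 * (t + 1)) := by
      unfold h1
      field_simp
      ring
    rw [eq_div_iff hM, key]
    have e1 : h1 t = -(2 * t - 1) / (6 * ((t - 1) ^ 3 * (t + 1))) := by
      unfold h1; field_simp
    have e2 : h2 t = -(2 * t - 1) / (6 * (t ^ 3 * (t - 2))) := by
      unfold h2; field_simp
    rw [e1, e2, div_mul_div_comm, div_eq_div_iff
      (mul_ne_zero (mul_ne_zero (by norm_num) (mul_ne_zero (pow_ne_zero _ h0) h3ne))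
        (mul_ne_zero (pow_ne_zero _ h1ne) h2ne))
      (mul_ne_zero (by norm_num) (mul_ne_zero (pow_ne_zero _ h1ne) h2ne))]
    ring
  · intro t h1ne h2ne hq hM
    have key : 6 * h1 t + 1 = t ^ 3 * (t - 2) / ((t - 1) ^ 3 * (t + 1)) := by
      unfold h1
      field_simp
      ring
    have key2 : -72 * h1 t + 12 = 12 * (t ^ 4 - 2 * t ^ 3 + 4 * t - 2) / ((t - 1) ^ 3 * (t + 1)) := by
      unfold h1
      field_simp
      ring
    rw [eq_div_iff hM, key, key2]
    have e3 : h3 t = t ^ 3 * (t - 2) / (12 * (t ^ 4 - 2 * t ^ 3 + 4 * t - 2)) := by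
      unfold h3; field_simp
    rw [e3, div_mul_div_comm, div_eq_div_iff
      (mul_ne_zero (mul_ne_zero (by norm_num) hq)
        (mul_ne_zero (pow_ne_zero _ h1ne) h2ne))
      (mul_ne_zero (pow_ne_zero _ h1ne) h2ne)]
    ring
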